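/- arXiv:2105.00015 — 2 statements merged into one kernel-verified Lean document; each statement's English description precedes it below -/
import Mathlib

section
/- Let U ⊆ ℂ be open and let A : U → End(V) be holomorphic with ‖A(z) − Λ‖ ≤ δ/(16·m²·κ²) and ‖A′(z)‖ ≤ κ₂ for all z ∈ U. Then for each s ∈ {1, …, m}, the Riesz projection map z ↦ P_s(A(z)) := −(1/2πi)·∮_{|ζ−a_s|=δ/2} (A(z) − ζ)⁻¹ dζ (positively oriented circle; the inverses exist for every ζ on this circle) is holomorphic on U and satisfies ‖(d/dz) P_s(A(z))‖ ≤ 8·κ₂·m²·κ²/δ for every z ∈ U. -/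
/-!
On the circle `|ζ - a_s| = δ/2` every `a_t` stays at distance at least `δ/2`, so the resolvent
`(Λ - ζ)⁻¹ = ∑ (a_t - ζ)⁻¹ Q_t` of the diagonal operator has norm at most `2mκ/δ`. The perturbation
`A(z) - Λ` is small enough that `‖A(z) - Λ‖ · ‖(Λ - ζ)⁻¹‖ ≤ 1/2`, so `A(z) - ζ` is invertible with
`‖(A(z) - ζ)⁻¹‖ ≤ 4mκ/δ`. Differentiating under the contour integral,
`d/dz (A(z) - ζ)⁻¹ = -(A(z) - ζ)⁻¹ A'(z) (A(z) - ζ)⁻¹` has norm at most `κ₂ (4mκ/δ)²`, and the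
factor `(2π)⁻¹ · length = δ/2` of the contour gives `8κ₂m²κ²/δ`.
-/

open scoped BigOperators

/-- The Riesz projection of an operator `A` associated with the positively oriented
circle of radius `r` centered at `c`:
`P(A) = −(1/2πi)·∮_{|ζ−c|=r} (A − ζ)⁻¹ dζ`. -/
noncomputable def rieszProj {V : Type*} [NormedAddCommGroup V] [NormedSpace ℂ V]
    (A : V →L[ℂ] V) (c : ℂ) (r : ℝ) : V →L[ℂ] V :=
  (-(2 * (Real.pi : ℂ) * Complex.I)⁻¹) •
    ∫ θ in (0 : ℝ)..(2 * Real.pi),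
      (Complex.I * (r : ℂ) * Complex.exp (Complex.I * (θ : ℂ))) •
        Ring.inverse (A - (c + (r : ℂ) * Complex.exp (Complex.I * (θ : ℂ))) • (1 : V →L[ℂ] V))

open Complex Metric Filter Topology

theorem IsIdempotentElem.one_le_norm {R : Type*} [NonUnitalNormedRing R] {e : R}
    (he : IsIdempotentElem e) (h0 : e ≠ 0) : 1 ≤ ‖e‖ := by
  have hle : ‖e‖ ≤ ‖e‖ * ‖e‖ := by simpa only [he.eq] using norm_mul_le e e
  exact (le_mul_iff_one_le_left (norm_pos_iff.mpr h0)).mp hle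

section Perturbation

variable {R : Type*} [NormedRing R] [HasSummableGeomSeries R]

theorem Units.isUnit_and_norm_inverse_le (u : Rˣ) {b : R} {q : ℝ}
    (hb : ‖b - u‖ * ‖(↑u⁻¹ : R)‖ ≤ q) (hq : q < 1) :
    IsUnit b ∧ ‖Ring.inverse b‖ ≤ ‖(↑u⁻¹ : R)‖ / (1 - q) := by
  nontriviality R
  have hu : 0 < ‖(↑u⁻¹ : R)‖ := Units.norm_pos u⁻¹
  have hnear : ‖b - u‖ < ‖(↑u⁻¹ : R)‖⁻¹ := by
    rw [← mul_lt_mul_iff_left₀ hu, inv_mul_cancel₀ hu.ne']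
    linarith
  set v := u.ofNearby b hnear
  have hv : (v : R) = b := Units.val_ofNearby u b hnear
  refine ⟨hv ▸ v.isUnit, ?_⟩
  rw [← hv, Ring.inverse_unit]
  have resolvent : (↑v⁻¹ : R) = ↑u⁻¹ + ↑v⁻¹ * (u - v) * ↑u⁻¹ := by
    simp [mul_sub, sub_mul, mul_assoc]
  have hle : ‖(↑v⁻¹ : R)‖ ≤ ‖(↑u⁻¹ : R)‖ + ‖(↑v⁻¹ : R)‖ * q := by
    calc ‖(↑v⁻¹ : R)‖ ≤ ‖(↑u⁻¹ : R)‖ + ‖(↑v⁻¹ : R)‖ * (‖(u - v : R)‖ * ‖(↑u⁻¹ : R)‖) := by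
          nth_rw 1 [resolvent]
          refine (norm_add_le _ _).trans (add_le_add_right ?_ _)
          rw [mul_assoc]
          exact (norm_mul_le _ _).trans (by gcongr; exact norm_mul_le _ _)
      _ ≤ ‖(↑u⁻¹ : R)‖ + ‖(↑v⁻¹ : R)‖ * q := by rw [norm_sub_rev, hv]; gcongr
  rw [le_div_iff₀ (by linarith)]
  linarith

end Perturbation

section Idempotents

variable {ι 𝕜 R : Type*} [Fintype ι] {Q : ι → R}

theorem OrthogonalIdempotents.sum_smul_mul_sum_smul [CommSemiring 𝕜] [Semiring R] [Algebra 𝕜 R]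
    (hQ : OrthogonalIdempotents Q) (c d : ι → 𝕜) :
    (∑ i, c i • Q i) * (∑ i, d i • Q i) = ∑ i, (c i * d i) • Q i := by
  classical
  simp only [Finset.sum_mul_sum, smul_mul_smul_comm, hQ.mul_eq, smul_ite, smul_zero,
    Finset.sum_ite_eq, Finset.mem_univ, if_true]

theorem CompleteOrthogonalIdempotents.sum_smul_sub_smul_one [CommRing 𝕜] [Ring R] [Algebra 𝕜 R]
    (hQ : CompleteOrthogonalIdempotents Q) (a : ι → 𝕜) (ζ : 𝕜) :
    ∑ i, a i • Q i - ζ • (1 : R) = ∑ i, (a i - ζ) • Q i := by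
  simp only [← hQ.complete, Finset.smul_sum, ← Finset.sum_sub_distrib, sub_smul]

def CompleteOrthogonalIdempotents.unitSumSmul [Field 𝕜] [Semiring R] [Algebra 𝕜 R]
    (hQ : CompleteOrthogonalIdempotents Q) (c : ι → 𝕜) (hc : ∀ i, c i ≠ 0) : Rˣ where
  val := ∑ i, c i • Q i
  inv := ∑ i, (c i)⁻¹ • Q i
  val_inv := by
    simp only [hQ.sum_smul_mul_sum_smul, mul_inv_cancel₀ (hc _), one_smul, hQ.complete]
  inv_val := by
    simp only [hQ.sum_smul_mul_sum_smul, inv_mul_cancel₀ (hc _), one_smul, hQ.complete]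

theorem norm_sum_inv_smul_le [NormedField 𝕜] [SeminormedAddCommGroup R] [NormedSpace 𝕜 R]
    {c : ι → 𝕜} {κ ρ : ℝ} (hQ : ∀ i, ‖Q i‖ ≤ κ) (hρ : 0 < ρ) (hc : ∀ i, ρ ≤ ‖c i‖) :
    ‖∑ i, (c i)⁻¹ • Q i‖ ≤ Fintype.card ι * κ / ρ := by
  calc ‖∑ i, (c i)⁻¹ • Q i‖ ≤ ∑ i, ‖c i‖⁻¹ * ‖Q i‖ := by
        simpa only [norm_smul, norm_inv] using norm_sum_le Finset.univ fun i => (c i)⁻¹ • Q i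
    _ ≤ ∑ _i : ι, ρ⁻¹ * κ := by
        gcongr with i
        exacts [hc i, hQ i]
    _ = Fintype.card ι * κ / ρ := by
        simp only [Finset.sum_const, Finset.card_univ, nsmul_eq_mul]
        ring

end Idempotents

section Resolvent

variable {ι 𝕜 R : Type*} [Fintype ι] [NormedField 𝕜] [NormedRing R] [NormedAlgebra 𝕜 R]
  [HasSummableGeomSeries R] {Q : ι → R}

theorem CompleteOrthogonalIdempotents.isUnit_and_norm_inverse_sub_smul_one_le
    (hQ : CompleteOrthogonalIdempotents Q) {a : ι → 𝕜} {ζ : 𝕜} {B : R} {κ ρ : ℝ}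
    (hκ : ∀ i, ‖Q i‖ ≤ κ) (hρ : 0 < ρ) (hζ : ∀ i, ρ ≤ ‖a i - ζ‖)
    (hB : ‖B - ∑ i, a i • Q i‖ * (Fintype.card ι * κ / ρ) ≤ 1 / 2) :
    IsUnit (B - ζ • 1) ∧ ‖Ring.inverse (B - ζ • 1)‖ ≤ 2 * (Fintype.card ι * κ / ρ) := by
  have hne : ∀ i, a i - ζ ≠ 0 := fun i h => by
    have := hζ i
    rw [h, norm_zero] at this
    linarith
  set u := hQ.unitSumSmul (fun i => a i - ζ) hne
  have hu : (u : R) = ∑ i, a i • Q i - ζ • 1 := (hQ.sum_smul_sub_smul_one a ζ).symm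
  have hu_inv : ‖(↑u⁻¹ : R)‖ ≤ Fintype.card ι * κ / ρ := norm_sum_inv_smul_le hκ hρ hζ
  have hdiff : B - ζ • 1 - u = B - ∑ i, a i • Q i := by rw [hu]; abel
  obtain ⟨hunit, hnorm⟩ := u.isUnit_and_norm_inverse_le (b := B - ζ • 1) (q := 1 / 2)
    (by rw [hdiff]; exact (mul_le_mul_of_nonneg_left hu_inv (norm_nonneg _)).trans hB)
    (by norm_num)
  refine ⟨hunit, hnorm.trans ?_⟩
  norm_num [div_eq_mul_inv] at hu_inv ⊢
  linarith

theorem CompleteOrthogonalIdempotents.isUnit_and_norm_inverse_sub_smul_one_le_of_mem_sphere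
    (hQ : CompleteOrthogonalIdempotents Q) {a : ι → 𝕜} {κ δ : ℝ}
    (hκ : ∀ i, ‖Q i‖ ≤ κ) (hκ1 : 1 ≤ κ) (ha : ∀ i j, i ≠ j → δ ≤ ‖a i - a j‖) (hδ : 0 < δ)
    {s : ι} {ζ : 𝕜} (hζ : ‖ζ - a s‖ = δ / 2)
    {B : R} (hB : ‖B - ∑ i, a i • Q i‖ ≤ δ / (16 * Fintype.card ι ^ 2 * κ ^ 2)) :
    IsUnit (B - ζ • 1) ∧ ‖Ring.inverse (B - ζ • 1)‖ ≤ 4 * Fintype.card ι * κ / δ := by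
  have hdist : ∀ i, δ / 2 ≤ ‖a i - ζ‖ := by
    intro i
    rcases eq_or_ne i s with rfl | hi
    · rw [norm_sub_rev, hζ]
    · have := norm_sub_le_norm_sub_add_norm_sub (a i) ζ (a s)
      linarith [ha i s hi]
  have hn : (1 : ℝ) ≤ Fintype.card ι := Nat.one_le_cast.mpr (Fintype.card_pos_iff.mpr ⟨s⟩)
  have hsmall : ‖B - ∑ i, a i • Q i‖ * (Fintype.card ι * κ / (δ / 2)) ≤ 1 / 2 := by
    calc ‖B - ∑ i, a i • Q i‖ * (Fintype.card ι * κ / (δ / 2))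
        ≤ δ / (16 * Fintype.card ι ^ 2 * κ ^ 2) * (Fintype.card ι * κ / (δ / 2)) := by gcongr
      _ = 1 / (8 * (Fintype.card ι * κ)) := by field_simp; ring
      _ ≤ 1 / 2 := by gcongr; nlinarith
  have := hQ.isUnit_and_norm_inverse_sub_smul_one_le hκ (half_pos hδ) hdist hsmall
  convert this using 2
  field_simp
  ring

end Resolvent

theorem HasDerivAt.ringInverse {𝕜 R : Type*} [NontriviallyNormedField 𝕜] [NormedRing R]
    [NormedAlgebra 𝕜 R] [HasSummableGeomSeries R] {f : 𝕜 → R} {f' : R} {z : 𝕜}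
    (hf : HasDerivAt f f' z) (hz : IsUnit (f z)) :
    HasDerivAt (fun w => Ring.inverse (f w))
      (-(Ring.inverse (f z) * f' * Ring.inverse (f z))) z := by
  obtain ⟨u, hu⟩ := hz
  have hinv := hasFDerivAt_ringInverse (𝕜 := 𝕜) u
  rw [hu] at hinv
  rw [← hu, Ring.inverse_unit]
  exact (hinv.comp_hasDerivAt z hf).congr_deriv (by simp)

theorem circleIntegral.integral_neg {E : Type*} [NormedAddCommGroup E] [NormedSpace ℂ E]
    (f : ℂ → E) (c : ℂ) (r : ℝ) : (∮ z in C(c, r), -f z) = -∮ z in C(c, r), f z := by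
  simp only [circleIntegral, smul_neg, intervalIntegral.integral_neg]

theorem hasDerivAt_circleIntegral_of_dominated {E : Type*} [NormedAddCommGroup E]
    [NormedSpace ℂ E] {F F' : ℂ → ℂ → E} {c z₀ : ℂ} {r K : ℝ} {U : Set ℂ} (hU : U ∈ 𝓝 z₀)
    (hF : ∀ z ∈ U, ContinuousOn (F z) (sphere c |r|))
    (hF' : ContinuousOn (F' z₀) (sphere c |r|))
    (hF'_le : ∀ z ∈ U, ∀ ζ ∈ sphere c |r|, ‖F' z ζ‖ ≤ K)
    (hdiff : ∀ z ∈ U, ∀ ζ ∈ sphere c |r|, HasDerivAt (F · ζ) (F' z ζ) z) :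
    HasDerivAt (fun z => ∮ ζ in C(c, r), F z ζ) (∮ ζ in C(c, r), F' z₀ ζ) z₀ := by
  have hcont : ∀ {f : ℂ → E}, ContinuousOn f (sphere c |r|) →
      Continuous fun θ => deriv (circleMap c r) θ • f (circleMap c r θ) := fun hf => by
    simp only [deriv_circleMap]
    exact ((continuous_circleMap 0 r).mul continuous_const).smul
      (hf.comp_continuous (continuous_circleMap c r) (circleMap_mem_sphere' c r))
  refine (intervalIntegral.hasDerivAt_integral_of_dominated_loc_of_deriv_le
    (F' := fun z θ => deriv (circleMap c r) θ • F' z (circleMap c r θ))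
    (bound := fun _ => |r| * K) hU
    (eventually_of_mem hU fun z hz => (hcont (hF z hz)).aestronglyMeasurable)
    ((hcont (hF z₀ (mem_of_mem_nhds hU))).intervalIntegrable _ _)
    (hcont hF').aestronglyMeasurable
    (Eventually.of_forall fun θ _ z hz => ?_) intervalIntegrable_const
    (Eventually.of_forall fun θ _ z hz => ?_)).2
  · rw [norm_smul, deriv_circleMap, norm_mul, norm_circleMap_zero, norm_I, mul_one]
    exact mul_le_mul_of_nonneg_left (hF'_le z hz _ (circleMap_mem_sphere' c r θ)) (abs_nonneg r)
  · exact (hdiff z hz _ (circleMap_mem_sphere' c r θ)).const_smul _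

section RieszProjection

variable {V : Type*} [NormedAddCommGroup V] [NormedSpace ℂ V]

theorem rieszProj_eq_circleIntegral (A : V →L[ℂ] V) (c : ℂ) (r : ℝ) :
    rieszProj A c r = -((2 * Real.pi * I)⁻¹ • ∮ ζ in C(c, r), Ring.inverse (A - ζ • 1)) := by
  rw [rieszProj, circleIntegral, neg_smul]
  congr 3
  funext θ
  simp only [deriv_circleMap, circleMap, zero_add]
  ring_nf

theorem hasDerivAt_rieszProj [CompleteSpace V] {A A' : ℂ → V →L[ℂ] V} {U : Set ℂ} {c z₀ : ℂ}
    {r K : ℝ} (hU : U ∈ 𝓝 z₀) (hA : ∀ z ∈ U, HasDerivAt A (A' z) z)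
    (hunit : ∀ z ∈ U, ∀ ζ ∈ sphere c |r|, IsUnit (A z - ζ • 1))
    (hbound : ∀ z ∈ U, ∀ ζ ∈ sphere c |r|,
      ‖Ring.inverse (A z - ζ • 1) * A' z * Ring.inverse (A z - ζ • 1)‖ ≤ K) :
    HasDerivAt (fun z => rieszProj (A z) c r)
      ((2 * Real.pi * I)⁻¹ • ∮ ζ in C(c, r),
        Ring.inverse (A z₀ - ζ • 1) * A' z₀ * Ring.inverse (A z₀ - ζ • 1)) z₀ := by
  have hcont : ∀ z ∈ U, ContinuousOn (fun ζ : ℂ => Ring.inverse (A z - ζ • 1)) (sphere c |r|) :=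
    fun z hz ζ hζ => by
      obtain ⟨u, hu⟩ := hunit z hz ζ hζ
      have hinv := NormedRing.inverse_continuousAt u
      rw [hu] at hinv
      exact (ContinuousAt.comp (f := fun ζ : ℂ => A z - ζ • 1) hinv
        (by fun_prop)).continuousWithinAt
  have hz₀ := mem_of_mem_nhds hU
  have hderiv := hasDerivAt_circleIntegral_of_dominated hU hcont
    (((hcont z₀ hz₀).mul continuousOn_const).mul (hcont z₀ hz₀)).neg
    (fun z hz ζ hζ => (norm_neg _).trans_le (hbound z hz ζ hζ))
    (fun z hz ζ hζ => ((hA z hz).sub_const _).ringInverse (hunit z hz ζ hζ))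
  have key := (hderiv.const_smul (2 * Real.pi * I)⁻¹).neg
  rw [circleIntegral.integral_neg, smul_neg, neg_neg] at key
  simp_rw [rieszProj_eq_circleIntegral]
  exact key

end RieszProjection

theorem stmt_5_general (V : Type*) [NormedAddCommGroup V] [NormedSpace ℂ V] [FiniteDimensional ℂ V]
    (m : ℕ)
    (a : Fin m → ℂ)
    (Q : Fin m → V →L[ℂ] V)
    (hQ0 : ∀ s, Q s ≠ 0)
    (hQdisj : ∀ s t, s ≠ t → Q s * Q t = 0)
    (hQsum : ∑ s, Q s = (1 : V →L[ℂ] V))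
    (κ δ : ℝ)
    (hκ : IsGreatest {x : ℝ | ∃ s, x = ‖Q s‖} κ)
    (hδ : IsLeast {x : ℝ | ∃ s t, s ≠ t ∧ x = ‖a s - a t‖} δ)
    (hδpos : 0 < δ)
    (Λ : V →L[ℂ] V) (hΛ : Λ = ∑ s, a s • Q s)
    (κ₂ : ℝ)
    (U : Set ℂ) (hU : IsOpen U)
    (A A' : ℂ → V →L[ℂ] V)
    (hAholo : ∀ z ∈ U, HasDerivAt A (A' z) z)
    (hAnear : ∀ z ∈ U, ‖A z - Λ‖ ≤ δ / (16 * (m : ℝ) ^ 2 * κ ^ 2))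
    (hA'bd : ∀ z ∈ U, ‖A' z‖ ≤ κ₂) :
    ∀ s : Fin m,
      (∀ z ∈ U, ∀ ζ : ℂ, ‖ζ - a s‖ = δ / 2 → IsUnit (A z - ζ • (1 : V →L[ℂ] V))) ∧
      DifferentiableOn ℂ (fun z => rieszProj (A z) (a s) (δ / 2)) U ∧
      ∃ D : ℂ → V →L[ℂ] V, ∀ z ∈ U,
        HasDerivAt (fun w => rieszProj (A w) (a s) (δ / 2)) (D z) z ∧
        ‖D z‖ ≤ 8 * κ₂ * (m : ℝ) ^ 2 * κ ^ 2 / δ := by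
  intro s
  have : CompleteSpace V := FiniteDimensional.complete ℂ V
  have hQ : CompleteOrthogonalIdempotents Q :=
    CompleteOrthogonalIdempotents.iff_ortho_complete.mpr ⟨fun i j h => hQdisj i j h, hQsum⟩
  have hκQ : ∀ t, ‖Q t‖ ≤ κ := fun t => hκ.2 ⟨t, rfl⟩
  have hκ1 : 1 ≤ κ := ((hQ.idem s).one_le_norm (hQ0 s)).trans (hκQ s)
  have hr : |δ / 2| = δ / 2 := abs_of_pos (half_pos hδpos)
  have hres : ∀ z ∈ U, ∀ ζ ∈ sphere (a s) |δ / 2|, IsUnit (A z - ζ • 1) ∧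
      ‖Ring.inverse (A z - ζ • 1)‖ ≤ 4 * m * κ / δ := fun z hz ζ hζ => by
    rw [hr, mem_sphere_iff_norm] at hζ
    simpa using hQ.isUnit_and_norm_inverse_sub_smul_one_le_of_mem_sphere hκQ hκ1
      (fun i j h => hδ.2 ⟨i, j, h, rfl⟩) hδpos hζ (by simpa [hΛ] using hAnear z hz)
  have hbound : ∀ z ∈ U, ∀ ζ ∈ sphere (a s) |δ / 2|,
      ‖Ring.inverse (A z - ζ • 1) * A' z * Ring.inverse (A z - ζ • 1)‖ ≤
        4 * m * κ / δ * κ₂ * (4 * m * κ / δ) := fun z hz ζ hζ => by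
    have hR := (hres z hz ζ hζ).2
    have hA' := hA'bd z hz
    refine norm_mul₃_le.trans ?_
    gcongr
    exact mul_nonneg ((norm_nonneg _).trans hR) ((norm_nonneg _).trans hA')
  have hD := fun z (hz : z ∈ U) => hasDerivAt_rieszProj (hU.mem_nhds hz) hAholo
    (fun z hz ζ hζ => (hres z hz ζ hζ).1) hbound
  refine ⟨fun z hz ζ hζ => (hres z hz ζ (by rwa [hr, mem_sphere_iff_norm])).1,
    fun z hz => (hD z hz).differentiableAt.differentiableWithinAt, _, fun z hz => ⟨hD z hz, ?_⟩⟩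
  calc _ ≤ δ / 2 * (4 * m * κ / δ * κ₂ * (4 * m * κ / δ)) :=
        circleIntegral.norm_two_pi_i_inv_smul_integral_le_of_norm_le_const (half_pos hδpos).le
          (hr ▸ hbound z hz)
    _ = 8 * κ₂ * (m : ℝ) ^ 2 * κ ^ 2 / δ := by field_simp; ring

/-- Holomorphic dependence of Riesz projections: if `A : U → End(V)` is holomorphic on
the open set `U` with `‖A(z) − Λ‖ ≤ δ/(16m²κ²)` and `‖A′(z)‖ ≤ κ₂` on `U`, then for
each `s` the resolvents on the circle `|ζ − a_s| = δ/2` exist, the map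
`z ↦ P_s(A(z))` is holomorphic on `U`, and its derivative is bounded by
`8κ₂m²κ²/δ`. -/
theorem stmt_5 (V : Type*) [NormedAddCommGroup V] [NormedSpace ℂ V] [FiniteDimensional ℂ V]
    (m : ℕ) (hm : 1 ≤ m)
    (a : Fin m → ℂ) (ha : Function.Injective a)
    (Q : Fin m → V →L[ℂ] V)
    (hQ0 : ∀ s, Q s ≠ 0)
    (hQidem : ∀ s, Q s * Q s = Q s)
    (hQdisj : ∀ s t, s ≠ t → Q s * Q t = 0)
    (hQsum : ∑ s, Q s = (1 : V →L[ℂ] V))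
    (hQrank : ∀ s, Module.finrank ℂ (LinearMap.range (Q s : V →ₗ[ℂ] V)) = 1)
    (κ δ : ℝ)
    (hκ : IsGreatest {x : ℝ | ∃ s, x = ‖Q s‖} κ)
    (hδ : IsLeast {x : ℝ | ∃ s t, s ≠ t ∧ x = ‖a s - a t‖} δ)
    (hδpos : 0 < δ)
    (Λ : V →L[ℂ] V) (hΛ : Λ = ∑ s, a s • Q s)
    (κ₂ : ℝ) (hκ₂ : 0 ≤ κ₂)
    (U : Set ℂ) (hU : IsOpen U)
    (A A' : ℂ → V →L[ℂ] V)
    (hAholo : ∀ z ∈ U, HasDerivAt A (A' z) z)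
    (hAnear : ∀ z ∈ U, ‖A z - Λ‖ ≤ δ / (16 * (m : ℝ) ^ 2 * κ ^ 2))
    (hA'bd : ∀ z ∈ U, ‖A' z‖ ≤ κ₂) :
    ∀ s : Fin m,
      (∀ z ∈ U, ∀ ζ : ℂ, ‖ζ - a s‖ = δ / 2 → IsUnit (A z - ζ • (1 : V →L[ℂ] V))) ∧
      DifferentiableOn ℂ (fun z => rieszProj (A z) (a s) (δ / 2)) U ∧
      ∃ D : ℂ → V →L[ℂ] V, ∀ z ∈ U,
        HasDerivAt (fun w => rieszProj (A w) (a s) (δ / 2)) (D z) z ∧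
        ‖D z‖ ≤ 8 * κ₂ * (m : ℝ) ^ 2 * κ ^ 2 / δ :=
  stmt_5_general V m a Q hQ0 hQdisj hQsum κ δ hκ hδ hδpos Λ hΛ κ₂ U hU A A' hAholo hAnear hA'bd
end

section
/- Under hypothesis (REG), if φ ∈ Ran Q satisfies F(H−E;Q)φ = 0, then the limit χ := lim_{ε→0⁺} R_{E−iε}HQφ exists in the norm of ℋ, the vector Φ := φ − χ satisfies HΦ = EΦ, and QΦ = φ. -/
/-!
Write `χ_ε := R_{E-iε} H φ`. For self-adjoint `A`, if `(A - z) x = p = (A - w) y` with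
`Re z = Re w` and `Im z, Im w < 0`, then `‖x - y‖² ≤ |‖x‖² - ‖y‖²|`; so `χ_ε` converges as soon
as `‖χ_ε‖²` does. Now `ε ‖χ_ε‖² = -Im ⟪Hφ, R_{E-iε} Hφ⟫`, which tends to `-Im ⟪φ, W(E) φ⟫ = 0`
because `F φ = 0` makes `W(E) φ = Q (H - E) Q φ`, while the `ε`-derivative
`Re ⟪Hφ, R_{E-iε}² Hφ⟫` of the right-hand side tends to `Re ⟪φ, W'(E) φ⟫`; so `‖χ_ε‖²`
converges by L'Hôpital's rule. Passing to the limit in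
`Q⊥ H χ_ε = Q⊥ H φ + (E - iε) χ_ε` and `Q H χ_ε = W(E - iε) φ` gives `H χ = H φ - E φ + E χ`.
-/

open Filter Topology ComplexConjugate
open scoped InnerProductSpace

section SelfAdjoint

variable {ℋ : Type*} [NormedAddCommGroup ℋ] [InnerProductSpace ℂ ℋ] [CompleteSpace ℋ]
  {A : ℋ →L[ℂ] ℋ} {x y p q : ℋ} {z w : ℂ}

theorem IsSelfAdjoint.inner_sub_inner_eq (hA : IsSelfAdjoint A)
    (hx : A x - z • x = p) (hy : A y - w • y = q) :
    ⟪x, q⟫_ℂ - ⟪p, y⟫_ℂ = (conj z - w) * ⟪x, y⟫_ℂ := by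
  rw [← hx, ← hy, inner_sub_right, inner_sub_left, inner_smul_right, inner_smul_left,
    ← ContinuousLinearMap.adjoint_inner_left, hA.adjoint_eq]
  ring

theorem IsSelfAdjoint.im_inner_eq (hA : IsSelfAdjoint A) (hx : A x - z • x = p) :
    (⟪x, p⟫_ℂ).im = -z.im * ‖x‖ ^ 2 := by
  have h := congrArg Complex.im (hA.inner_sub_inner_eq hx hx)
  rw [inner_self_eq_norm_sq_to_K] at h
  simp [Complex.mul_im, ← Complex.ofReal_pow] at h
  have hpx : (⟪p, x⟫_ℂ).im = -(⟪x, p⟫_ℂ).im := inner_im_symm (𝕜 := ℂ) p x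
  linarith

theorem IsSelfAdjoint.abs_im_mul_norm_le (hA : IsSelfAdjoint A) (hx : A x - z • x = p) :
    |z.im| * ‖x‖ ≤ ‖p‖ := by
  have hsq : |z.im| * ‖x‖ ^ 2 ≤ ‖x‖ * ‖p‖ := by
    calc |z.im| * ‖x‖ ^ 2 = |(⟪x, p⟫_ℂ).im| := by
          rw [hA.im_inner_eq hx, abs_mul, abs_neg, abs_of_nonneg (sq_nonneg ‖x‖)]
      _ ≤ ‖⟪x, p⟫_ℂ‖ := Complex.abs_im_le_norm _
      _ ≤ ‖x‖ * ‖p‖ := norm_inner_le_norm x p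
  rcases (norm_nonneg x).eq_or_lt with hx0 | hx0
  · rw [← hx0, mul_zero]; exact norm_nonneg p
  · nlinarith

theorem IsSelfAdjoint.norm_sub_sq_le (hA : IsSelfAdjoint A) (hzw : z.re = w.re)
    (hz : z.im < 0) (hw : w.im < 0) (hx : A x - z • x = p) (hy : A y - w • y = p) :
    ‖x - y‖ ^ 2 ≤ |‖x‖ ^ 2 - ‖y‖ ^ 2| := by
  have hxx := hA.im_inner_eq hx
  have hyy := hA.im_inner_eq hy
  have hxy := congrArg Complex.im (hA.inner_sub_inner_eq hx hy)
  simp only [Complex.sub_im, Complex.conj_im, Complex.mul_im, Complex.conj_re, Complex.sub_re,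
    hzw, sub_self, zero_mul, zero_add] at hxy
  have hpy : (⟪p, y⟫_ℂ).im = -(⟪y, p⟫_ℂ).im := inner_im_symm (𝕜 := ℂ) p y
  rw [norm_sub_sq (𝕜 := ℂ), RCLike.re_to_complex]
  have hpos : 0 < -z.im - w.im := by linarith
  rw [← mul_le_mul_iff_right₀ hpos]
  calc (-z.im - w.im) * (‖x‖ ^ 2 - 2 * (⟪x, y⟫_ℂ).re + ‖y‖ ^ 2)
      = (z.im - w.im) * (‖x‖ ^ 2 - ‖y‖ ^ 2) := by
        linear_combination 2 * hxy - 2 * hxx - 2 * hyy + 2 * hpy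
    _ ≤ |z.im - w.im| * |‖x‖ ^ 2 - ‖y‖ ^ 2| := by rw [← abs_mul]; exact le_abs_self _
    _ ≤ (-z.im - w.im) * |‖x‖ ^ 2 - ‖y‖ ^ 2| := by
      gcongr; exact abs_le.mpr ⟨by linarith, by linarith⟩

end SelfAdjoint

theorem sub_eq_smul_mul_of_resolvent {𝕜 𝔸 : Type*} [CommRing 𝕜] [Ring 𝔸] [Algebra 𝕜 𝔸]
    {A P S T : 𝔸} {z w : 𝕜}
    (hS : S * A - z • S = P) (hT : A * T - w • T = P) (hSP : S * P = S) (hPT : P * T = T) :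
    S - T = (z - w) • (S * T) :=
  calc S - T = S * (A * T - w • T) - (S * A - z • S) * T := by rw [hT, hS, hSP, hPT]
    _ = (z - w) • (S * T) := by
      simp only [mul_sub, sub_mul, mul_smul_comm, smul_mul_assoc, mul_assoc, sub_smul]
      abel

theorem hasDerivAt_of_sub_eq_smul_mul {𝕜 𝔸 : Type*} [NontriviallyNormedField 𝕜] [NormedRing 𝔸]
    [NormedAlgebra 𝕜 𝔸] {R : 𝕜 → 𝔸} {z : 𝕜} {C : ℝ}
    (hres : ∀ᶠ w in 𝓝 z, R w - R z = (w - z) • (R w * R z)) (hbdd : ∀ᶠ w in 𝓝 z, ‖R w‖ ≤ C) :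
    HasDerivAt R (R z * R z) z := by
  have hcont : Tendsto R (𝓝 z) (𝓝 (R z)) := by
    rw [tendsto_iff_norm_sub_tendsto_zero]
    refine squeeze_zero_norm' (a := fun w => ‖w - z‖ * (C * ‖R z‖)) ?_ ?_
    · filter_upwards [hres, hbdd] with w hw hC
      rw [norm_norm, hw]
      calc ‖(w - z) • (R w * R z)‖ ≤ ‖w - z‖ * (‖R w‖ * ‖R z‖) := by
            grw [norm_smul_le, norm_mul_le]
        _ ≤ ‖w - z‖ * (C * ‖R z‖) := by gcongr
    · have : Continuous fun w => ‖w - z‖ * (C * ‖R z‖) := by fun_prop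
      simpa using this.tendsto z
  rw [hasDerivAt_iff_tendsto_slope]
  refine ((hcont.mul_const (R z)).mono_left nhdsWithin_le_nhds).congr' ?_
  filter_upwards [nhdsWithin_le_nhds hres, self_mem_nhdsWithin] with w hw hne
  rw [slope_def_module, hw, smul_smul, inv_mul_cancel₀ (sub_ne_zero.2 hne), one_smul]

theorem cauchy_map_of_sq_dist_le {α E : Type*} [PseudoMetricSpace E] {l : Filter α} [NeBot l]
    {f : α → E} {q : α → ℝ} {c : ℝ} (hq : Tendsto q l (𝓝 c))
    (h : ∀ᶠ p in l ×ˢ l, dist (f p.1) (f p.2) ^ 2 ≤ dist (q p.1) (q p.2)) :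
    Cauchy (l.map f) := by
  have hq' := cauchy_map_iff'.1 hq.cauchy_map
  rw [tendsto_uniformity_iff_dist_tendsto_zero] at hq'
  rw [cauchy_map_iff', tendsto_uniformity_iff_dist_tendsto_zero]
  have hsqrt : Tendsto (fun p : α × α => √(dist (q p.1) (q p.2))) (l ×ˢ l) (𝓝 0) := by
    simpa using hq'.sqrt
  refine squeeze_zero' (Eventually.of_forall fun _ => dist_nonneg) ?_ hsqrt
  filter_upwards [h] with p hp
  exact Real.le_sqrt_of_sq_le hp

theorem tendsto_sub_ofReal_mul_I (E : ℝ) :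
    Tendsto (fun ε : ℝ => (E : ℂ) - ε * Complex.I) (𝓝[>] 0) (𝓝[{z : ℂ | z.im < 0}] E) := by
  refine tendsto_nhdsWithin_iff.2 ⟨?_, eventually_nhdsWithin_of_forall fun ε (hε : 0 < ε) => ?_⟩
  · have : Continuous fun ε : ℝ => (E : ℂ) - ε * Complex.I := by fun_prop
    simpa using (this.tendsto 0).mono_left nhdsWithin_le_nhds
  · simpa using hε

/-- For `Im z < 0`, `R z` is the inverse of `A - z` on `Ran P`, extended by `0` on `ker P`:
the paper's `R_z` for `A = Q⊥HQ⊥` and `P = Q⊥`. -/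
structure IsReducedResolvent {𝔸 : Type*} [Ring 𝔸] [Algebra ℂ 𝔸] (A P : 𝔸) (R : ℂ → 𝔸) :
    Prop where
  mul_proj : ∀ z : ℂ, z.im < 0 → R z * P = R z
  proj_mul : ∀ z : ℂ, z.im < 0 → P * R z = R z
  right_inverse : ∀ z : ℂ, z.im < 0 → A * R z - z • R z = P
  left_inverse : ∀ z : ℂ, z.im < 0 → R z * A - z • R z = P

namespace IsReducedResolvent

theorem of_eq_mul_mul {𝔸 : Type*} [Ring 𝔸] [Algebra ℂ 𝔸] {A P : 𝔸} {R : ℂ → 𝔸}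
    (hP : IsIdempotentElem P)
    (h : ∀ z : ℂ, z.im < 0 → R z = P * R z * P ∧ A * R z - z • R z = P ∧ R z * A - z • R z = P) :
    IsReducedResolvent A P R where
  mul_proj z hz := by
    obtain ⟨hRP, -⟩ := h z hz
    calc R z * P = P * R z * P * P := by rw [← hRP]
      _ = R z := by rw [mul_assoc, hP.eq, ← hRP]
  proj_mul z hz := by
    obtain ⟨hRP, -⟩ := h z hz
    calc P * R z = P * (P * R z * P) := by rw [← hRP]
      _ = R z := by rw [← mul_assoc, ← mul_assoc, hP.eq, ← hRP]
  right_inverse z hz := (h z hz).2.1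
  left_inverse z hz := (h z hz).2.2

theorem sub_eq {𝔸 : Type*} [Ring 𝔸] [Algebra ℂ 𝔸] {A P : 𝔸} {R : ℂ → 𝔸}
    (hR : IsReducedResolvent A P R) {z w : ℂ} (hz : z.im < 0) (hw : w.im < 0) :
    R z - R w = (z - w) • (R z * R w) :=
  sub_eq_smul_mul_of_resolvent (hR.left_inverse z hz) (hR.right_inverse w hw) (hR.mul_proj z hz)
    (hR.proj_mul w hw)

variable {ℋ : Type*} [NormedAddCommGroup ℋ] [InnerProductSpace ℂ ℋ]
  {A P : ℋ →L[ℂ] ℋ} {R : ℂ → ℋ →L[ℂ] ℋ}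

theorem apply_sub (hR : IsReducedResolvent A P R) {z : ℂ} (hz : z.im < 0) (x : ℋ) :
    A (R z x) - z • R z x = P x := by
  simpa using congrArg (fun T => T x) (hR.right_inverse z hz)

theorem proj_apply (hR : IsReducedResolvent A P R) {z : ℂ} (hz : z.im < 0) (x : ℋ) :
    P (R z x) = R z x :=
  congrArg (fun T => T x) (hR.proj_mul z hz)

theorem apply_eq_of_tendsto {H : ℋ →L[ℂ] ℋ} (hR : IsReducedResolvent (P * H * P) P R) {E : ℝ}
    {ψ χ : ℋ} (hχ : Tendsto (fun ε : ℝ => R (E - ε * Complex.I) ψ) (𝓝[>] 0) (𝓝 χ)) :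
    P χ = χ ∧ P (H χ) = P ψ + (E : ℂ) • χ := by
  have hz : ∀ᶠ ε : ℝ in 𝓝[>] 0, ((E : ℂ) - ε * Complex.I).im < 0 :=
    eventually_nhdsWithin_of_forall fun ε (hε : 0 < ε) => by simpa using hε
  constructor
  · refine tendsto_nhds_unique ((P.continuous.tendsto χ).comp hχ) (hχ.congr' ?_)
    filter_upwards [hz] with ε hε
    exact (hR.proj_apply hε ψ).symm
  · refine tendsto_nhds_unique (((P.continuous.comp H.continuous).tendsto χ).comp hχ) ?_
    refine (tendsto_const_nhds.add
      ((tendsto_sub_ofReal_mul_I E).mono_right nhdsWithin_le_nhds |>.smul hχ)).congr' ?_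
    filter_upwards [hz] with ε hε
    have h := hR.apply_sub hε ψ
    rw [mul_apply_eq_comp, mul_apply_eq_comp, hR.proj_apply hε,
      sub_eq_iff_eq_add] at h
    exact h.symm

variable [CompleteSpace ℋ]

theorem norm_le (hR : IsReducedResolvent A P R) (hA : IsSelfAdjoint A) {z : ℂ} (hz : z.im < 0) :
    ‖R z‖ ≤ ‖P‖ / |z.im| := by
  have hz' : 0 < |z.im| := abs_pos.2 hz.ne
  refine ContinuousLinearMap.opNorm_le_bound _ (by positivity) fun x => ?_
  rw [div_mul_eq_mul_div, le_div_iff₀ hz', mul_comm]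
  exact (hA.abs_im_mul_norm_le (hR.apply_sub hz x)).trans (P.le_opNorm x)

theorem hasDerivAt (hR : IsReducedResolvent A P R) (hA : IsSelfAdjoint A) {z : ℂ}
    (hz : z.im < 0) : HasDerivAt R (R z * R z) z := by
  have hU : ∀ᶠ w in 𝓝 z, w.im < z.im / 2 :=
    Complex.continuous_im.continuousAt.eventually_lt continuousAt_const (by linarith)
  refine hasDerivAt_of_sub_eq_smul_mul (C := 2 * ‖P‖ / -z.im) ?_ ?_
  · filter_upwards [hU] with w hw
    exact hR.sub_eq (by linarith) hz
  · filter_upwards [hU] with w hw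
    refine (hR.norm_le hA (by linarith)).trans ?_
    rw [abs_of_neg (by linarith), div_le_div_iff₀ (by linarith) (by linarith)]
    nlinarith [norm_nonneg P]

theorem hasDerivAt_inner (hR : IsReducedResolvent A P R) (hA : IsSelfAdjoint A) (ψ : ℋ) {z : ℂ}
    (hz : z.im < 0) : HasDerivAt (fun w => ⟪ψ, R w ψ⟫_ℂ) ⟪ψ, (R z * R z) ψ⟫_ℂ z :=
  ((innerSL ℂ ψ).comp (ContinuousLinearMap.apply ℂ ℋ ψ)).hasFDerivAt.comp_hasDerivAt z
    (hR.hasDerivAt hA hz)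

theorem hasDerivAt_im_inner (hR : IsReducedResolvent A P R) (hA : IsSelfAdjoint A) (E : ℝ)
    (ψ : ℋ) {ε : ℝ} (hε : 0 < ε) :
    HasDerivAt (fun t : ℝ => (⟪ψ, R (E - t * Complex.I) ψ⟫_ℂ).im)
      (-(⟪ψ, (R (E - ε * Complex.I) * R (E - ε * Complex.I)) ψ⟫_ℂ).re) ε := by
  have hpath : HasDerivAt (fun t : ℝ => (E : ℂ) - t * Complex.I) (-Complex.I) ε := by
    simpa using ((hasDerivAt_id ε).ofReal_comp.mul_const Complex.I).const_sub (E : ℂ)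
  refine (Complex.imCLM.hasFDerivAt.comp_hasDerivAt ε
    ((hR.hasDerivAt_inner hA ψ (by simpa using hε)).comp ε hpath)).congr_deriv ?_
  simp [Complex.mul_im]

theorem tendsto_norm_sq (hR : IsReducedResolvent A P R) (hA : IsSelfAdjoint A)
    (hP : IsSelfAdjoint P) (E : ℝ) (ψ : ℋ) {c : ℝ}
    (hu : Tendsto (fun ε : ℝ => (⟪ψ, R (E - ε * Complex.I) ψ⟫_ℂ).im) (𝓝[>] 0) (𝓝 0))
    (hv : Tendsto (fun ε : ℝ => (⟪ψ, (R (E - ε * Complex.I) * R (E - ε * Complex.I)) ψ⟫_ℂ).re)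
      (𝓝[>] 0) (𝓝 c)) :
    Tendsto (fun ε : ℝ => ‖R (E - ε * Complex.I) ψ‖ ^ 2) (𝓝[>] 0) (𝓝 c) := by
  have hquot := HasDerivAt.lhopital_zero_nhdsGT
    (eventually_nhdsWithin_of_forall fun ε hε => hR.hasDerivAt_im_inner hA E ψ hε)
    (eventually_nhdsWithin_of_forall fun ε _ => hasDerivAt_id ε)
    (Eventually.of_forall fun _ => one_ne_zero) hu
    (tendsto_nhdsWithin_of_tendsto_nhds tendsto_id) (hv.neg.congr fun _ => (div_one _).symm)
  refine (hquot.neg.congr' ?_).trans (by rw [neg_neg])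
  filter_upwards [self_mem_nhdsWithin] with ε (hε : 0 < ε)
  have hz : ((E : ℂ) - ε * Complex.I).im < 0 := by simpa using hε
  have h := hA.im_inner_eq (hR.apply_sub hz ψ)
  rw [← hP.adjoint_eq, ContinuousLinearMap.adjoint_inner_right, hR.proj_apply hz] at h
  have hsymm : (⟪R (E - ε * Complex.I) ψ, ψ⟫_ℂ).im = -(⟪ψ, R (E - ε * Complex.I) ψ⟫_ℂ).im :=
    inner_im_symm (𝕜 := ℂ) _ _
  simp only [Complex.sub_im, Complex.ofReal_im, Complex.mul_im, Complex.ofReal_re,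
    Complex.I_re, Complex.I_im] at h
  rw [id_eq, ← neg_div, div_eq_iff hε.ne']
  linarith

theorem exists_tendsto (hR : IsReducedResolvent A P R) (hA : IsSelfAdjoint A)
    (hP : IsSelfAdjoint P) (E : ℝ) (ψ : ℋ) {c : ℝ}
    (hu : Tendsto (fun ε : ℝ => (⟪ψ, R (E - ε * Complex.I) ψ⟫_ℂ).im) (𝓝[>] 0) (𝓝 0))
    (hv : Tendsto (fun ε : ℝ => (⟪ψ, (R (E - ε * Complex.I) * R (E - ε * Complex.I)) ψ⟫_ℂ).re)
      (𝓝[>] 0) (𝓝 c)) :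
    ∃ χ, Tendsto (fun ε : ℝ => R (E - ε * Complex.I) ψ) (𝓝[>] 0) (𝓝 χ) := by
  refine cauchy_map_iff_exists_tendsto.1 <|
    cauchy_map_of_sq_dist_le (hR.tendsto_norm_sq hA hP E ψ hu hv) ?_
  filter_upwards [prod_mem_prod self_mem_nhdsWithin self_mem_nhdsWithin]
    with ⟨ε, δ⟩ ⟨(hε : 0 < ε), (hδ : 0 < δ)⟩
  have hzε : ((E : ℂ) - ε * Complex.I).im < 0 := by simpa using hε
  have hzδ : ((E : ℂ) - δ * Complex.I).im < 0 := by simpa using hδ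
  rw [dist_eq_norm, Real.dist_eq]
  exact hA.norm_sub_sq_le (by simp) hzε hzδ (hR.apply_sub hzε ψ) (hR.apply_sub hzδ ψ)

end IsReducedResolvent

theorem tendsto_inner_conj_apply {ℋ : Type*} [NormedAddCommGroup ℋ] [InnerProductSpace ℂ ℋ]
    [CompleteSpace ℋ] {H Q : ℋ →L[ℂ] ℋ} (hH : IsSelfAdjoint H) (hQ : IsSelfAdjoint Q) {E : ℝ}
    {T : ℂ → ℋ →L[ℂ] ℋ} {T₀ : ℋ →L[ℂ] ℋ}
    (hT : Tendsto (fun z => Q * H * T z * H * Q) (𝓝[{z : ℂ | z.im < 0}] E) (𝓝 T₀)) (φ : ℋ) :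
    Tendsto (fun ε : ℝ => ⟪H (Q φ), T (E - ε * Complex.I) (H (Q φ))⟫_ℂ) (𝓝[>] 0)
      (𝓝 ⟪φ, T₀ φ⟫_ℂ) := by
  have hconj (S : ℋ →L[ℂ] ℋ) : ⟪φ, (Q * H * S * H * Q) φ⟫_ℂ = ⟪H (Q φ), S (H (Q φ))⟫_ℂ := by
    rw [show Q * H * S * H * Q = star (H * Q) * S * (H * Q) by
      simp only [star_mul, hH.star_eq, hQ.star_eq, mul_assoc],
      ContinuousLinearMap.star_eq_adjoint, mul_assoc, mul_apply_eq_comp,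
      ContinuousLinearMap.adjoint_inner_right]
    rfl
  simpa only [Function.comp_def, ContinuousLinearMap.apply_apply, hconj] using
    (tendsto_const_nhds (x := φ)).inner (𝕜 := ℂ)
      (((ContinuousLinearMap.apply ℂ ℋ φ).continuous.tendsto T₀).comp
        (hT.comp (tendsto_sub_ofReal_mul_I E)))

/-- Weak isospectrality of the Feshbach map, direction (3): under the regularity
hypothesis (REG), if `φ ∈ Ran Q` satisfies `F(H−E;Q)φ = 0`, then
`χ := lim_{ε→0⁺} R_{E−iε}HQφ` exists in norm, and `Φ := φ − χ` satisfies `HΦ = EΦ`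
and `QΦ = φ`. -/
theorem stmt_7 (ℋ : Type*) [NormedAddCommGroup ℋ] [InnerProductSpace ℂ ℋ] [CompleteSpace ℋ]
    (H : ℋ →L[ℂ] ℋ) (hH : IsSelfAdjoint H)
    (Q : ℋ →L[ℂ] ℋ) (hQsa : IsSelfAdjoint Q) (hQidem : Q * Q = Q)
    (E : ℝ)
    (R : ℂ → ℋ →L[ℂ] ℋ)
    (hR : ∀ z : ℂ, z.im < 0 →
      R z = (1 - Q) * R z * (1 - Q) ∧
      ((1 - Q) * H * (1 - Q)) * R z - z • R z = 1 - Q ∧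
      R z * ((1 - Q) * H * (1 - Q)) - z • R z = 1 - Q)
    (WE W'E : ℋ →L[ℂ] ℋ)
    (hWE : Tendsto (fun z : ℂ => Q * H * R z * H * Q)
      (nhdsWithin (E : ℂ) {z : ℂ | z.im < 0}) (nhds WE))
    (hW'E : Tendsto (fun z : ℂ => Q * H * (R z * R z) * H * Q)
      (nhdsWithin (E : ℂ) {z : ℂ | z.im < 0}) (nhds W'E))
    (F : ℋ →L[ℂ] ℋ)
    (hF : F = Q * (H - (E : ℂ) • (1 : ℋ →L[ℂ] ℋ)) * Q - WE)
    (φ : ℋ) (hφ : Q φ = φ) (hFφ : F φ = 0) :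
    ∃ χ : ℋ,
      Tendsto (fun ε : ℝ => (R ((E : ℂ) - (ε : ℂ) * Complex.I)) (H (Q φ)))
        (nhdsWithin 0 (Set.Ioi 0)) (nhds χ) ∧
      H (φ - χ) = (E : ℂ) • (φ - χ) ∧
      Q (φ - χ) = φ := by
  have hPsa : IsSelfAdjoint (1 - Q) := (IsSelfAdjoint.one _).sub hQsa
  have hRed := IsReducedResolvent.of_eq_mul_mul (IsIdempotentElem.one_sub hQidem) hR
  have hA : IsSelfAdjoint ((1 - Q) * H * (1 - Q)) := hH.conjugate_self hPsa
  have hWEφ : WE φ = (Q * (H - (E : ℂ) • (1 : ℋ →L[ℂ] ℋ)) * Q) φ :=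
    (sub_eq_zero.1 (by rwa [hF] at hFφ)).symm
  have him : (⟪φ, WE φ⟫_ℂ).im = 0 := by
    rw [hWEφ]
    exact ((hH.sub (IsSelfAdjoint.smul (Complex.conj_ofReal E) (.one _))).conjugate_self
      hQsa).isSymmetric.im_inner_self_apply φ
  have hu := (Complex.continuous_im.tendsto _).comp (tendsto_inner_conj_apply hH hQsa hWE φ)
  rw [him] at hu
  obtain ⟨χ, hχ⟩ := hRed.exists_tendsto hA hPsa E (H (Q φ)) hu
    ((Complex.continuous_re.tendsto _).comp (tendsto_inner_conj_apply hH hQsa hW'E φ))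
  obtain ⟨hPχ, hPHχ⟩ := hRed.apply_eq_of_tendsto hχ
  have hQχ : Q χ = 0 := by simpa using hPχ
  have hQHχ : Q (H χ) = WE φ :=
    tendsto_nhds_unique (((Q.continuous.comp H.continuous).tendsto χ).comp hχ)
      (((ContinuousLinearMap.apply ℂ ℋ φ).continuous.tendsto WE).comp
        (hWE.comp (tendsto_sub_ofReal_mul_I E)))
  refine ⟨χ, hχ, ?_, by simp [hQχ, hφ]⟩
  have hHχ : H χ = Q (H χ) + (1 - Q) (H χ) := by simp
  rw [map_sub, hHχ, hQHχ, hPHχ, hWEφ]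
  simp [mul_apply_eq_comp, hφ, smul_sub]
  abel
end
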